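/- Let q ≥ 2 be an integer, v(s) := (1/q − 1/2)((π−s)/π)³ + (1/q)(s−π)/π + 1/2, and w(s) := 2π v(s)^q / (v(s)^q + v(2π−s)^q). Then w vanishes to order q at the endpoint s = 0: the j-th derivative of w at 0 equals 0 for every j with 0 ≤ j ≤ q − 1. (This high-order vanishing of the grading function's derivatives at the endpoints is what makes the trapezoid rule in the graded parameter achieve high-order accuracy, typically order q.) -/

import Mathlib

open Real

/-- The Kress grading auxiliary function (integer grading parameter `q`):
`v(s) = (1/q − 1/2)((π−s)/π)³ + (1/q)(s−π)/π + 1/2`. -/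
noncomputable def kressV (q : ℕ) (s : ℝ) : ℝ :=
  (1 / (q : ℝ) - 1 / 2) * ((π - s) / π) ^ 3 + (1 / (q : ℝ)) * (s - π) / π + 1 / 2

/-- The Kress corner-grading function `w(s) = 2π v(s)^q / (v(s)^q + v(2π−s)^q)`
with integer exponent `q`. -/
noncomputable def kressW (q : ℕ) (s : ℝ) : ℝ :=
  2 * π * kressV q s ^ q / (kressV q s ^ q + kressV q (2 * π - s) ^ q)

/-! Since `v(0) = 0` and `v` is a cubic, `v(s) = s·u(s)` for a quadratic `u`, so
`w(s) = s^q · 2π u(s)^q / (v(s)^q + v(2π−s)^q)`. The denominator equals `1` at `s = 0`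
(because `v(2π) = 1`), hence the second factor is smooth near `0`, and by the Leibniz rule
every derivative of order `j < q` of such a product vanishes at `0`. -/

lemma iteratedDeriv_pow_mul_eq_zero {𝕜 : Type*} [NontriviallyNormedField 𝕜] {h : 𝕜 → 𝕜}
    {j n : ℕ} (hh : ContDiffAt 𝕜 j h 0) (hjn : j < n) :
    iteratedDeriv j (fun s => s ^ n * h s) 0 = 0 := by
  rw [iteratedDeriv_fun_mul (f := (· ^ n)) (by fun_prop) hh]
  refine Finset.sum_eq_zero fun i hi => ?_
  have hin : i ≠ n := by
    rw [Finset.mem_range] at hi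
    omega
  rw [iteratedDeriv_fun_pow_zero, if_neg hin]
  ring

noncomputable def kressU (q : ℕ) (s : ℝ) : ℝ :=
  (1 / (q : ℝ) - 1 / 2) * (-3 / π + 3 * s / π ^ 2 - s ^ 2 / π ^ 3) + 1 / ((q : ℝ) * π)

lemma kressV_eq_mul_kressU {q : ℕ} (hq : q ≠ 0) (s : ℝ) : kressV q s = s * kressU q s := by
  unfold kressV kressU
  field_simp
  ring

lemma kressV_zero (q : ℕ) : kressV q 0 = 0 := by
  unfold kressV
  field_simp
  ring

lemma kressV_two_pi (q : ℕ) : kressV q (2 * π) = 1 := by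
  unfold kressV
  field_simp
  ring

lemma contDiff_kressV (q : ℕ) : ContDiff ℝ ⊤ (kressV q) := by
  unfold kressV
  fun_prop (disch := positivity)

lemma contDiff_kressU (q : ℕ) : ContDiff ℝ ⊤ (kressU q) := by
  unfold kressU
  fun_prop (disch := positivity)

lemma kressW_eq_pow_mul {q : ℕ} (hq : q ≠ 0) :
    kressW q = fun s =>
      s ^ q * (2 * π * kressU q s ^ q / (kressV q s ^ q + kressV q (2 * π - s) ^ q)) := by
  funext s
  rw [kressW, kressV_eq_mul_kressU hq s, mul_pow]
  ring

lemma contDiffAt_kressW_cofactor {q : ℕ} (hq : q ≠ 0) :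
    ContDiffAt ℝ ⊤
      (fun s => 2 * π * kressU q s ^ q / (kressV q s ^ q + kressV q (2 * π - s) ^ q)) 0 := by
  have hV := contDiff_kressV q
  refine (contDiffAt_const.mul ((contDiff_kressU q).contDiffAt.pow q)).div ?_ ?_
  · exact (hV.pow q).contDiffAt.add ((hV.comp (contDiff_const.sub contDiff_id)).pow q).contDiffAt
  · simp [kressV_zero, kressV_two_pi, hq]

/-- For integer `q ≥ 2`, the Kress grading function `w` vanishes to order `q` at the
endpoint `s = 0`: its `j`-th derivative at `0` vanishes for every `0 ≤ j ≤ q − 1`.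
This high-order vanishing is what makes the trapezoid rule in the graded parameter
achieve high-order (typically order `q`) accuracy. -/
theorem kressW_vanishes_to_order (q : ℕ) (hq : 2 ≤ q) :
    ∀ j : ℕ, j ≤ q - 1 → iteratedDeriv j (kressW q) 0 = 0 := by
  intro j hj
  have hq0 : q ≠ 0 := by omega
  rw [kressW_eq_pow_mul hq0]
  exact iteratedDeriv_pow_mul_eq_zero
    ((contDiffAt_kressW_cofactor hq0).of_le le_top) (by omega)
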